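/- An argument ⟨Γ, Δ⟩ is (0,1]-symmetric valid if and only if some γ ∈ Γ is classically unsatisfiable or some δ ∈ Δ is a classical tautology. -/

import Mathlib

/-- Propositional formulas: atoms, negation, disjunction. -/
inductive Fml : Type
  | atom : ℕ → Fml
  | neg : Fml → Fml
  | or : Fml → Fml → Fml
deriving DecidableEq

namespace Fml

def and (φ ψ : Fml) : Fml := neg (or (neg φ) (neg ψ))

def bot : Fml := and (atom 0) (neg (atom 0))

def imp (φ ψ : Fml) : Fml := or (neg φ) ψ

def eval (v : ℕ → Bool) : Fml → Bool
  | atom n => v n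
  | neg φ => !(eval v φ)
  | or φ ψ => (eval v φ) || (eval v ψ)

end Fml

/-- Two formulas are jointly classically unsatisfiable. -/
def Incompatible (φ ψ : Fml) : Prop :=
  ∀ v : ℕ → Bool, ¬(φ.eval v = true ∧ ψ.eval v = true)

/-- Classical (Set-Set) validity. -/
def ClValid (Γ Δ : Finset Fml) : Prop :=
  ∀ v : ℕ → Bool, (∀ γ ∈ Γ, γ.eval v = true) → ∃ δ ∈ Δ, δ.eval v = true

/-- Classical single-conclusion entailment. -/
def ClEntails (Γ : Finset Fml) (φ : Fml) : Prop :=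
  ∀ v : ℕ → Bool, (∀ γ ∈ Γ, γ.eval v = true) → φ.eval v = true

def ClConsistent (Γ : Finset Fml) : Prop :=
  ∃ v : ℕ → Bool, ∀ γ ∈ Γ, γ.eval v = true

def Tautology (φ : Fml) : Prop := ∀ v : ℕ → Bool, φ.eval v = true

/-- A probability distribution on formulas. -/
structure ProbDist where
  p : Fml → ℝ
  nonneg : ∀ φ, 0 ≤ p φ
  le_one : ∀ φ, p φ ≤ 1
  bot_eq : p Fml.bot = 0
  neg_eq : ∀ φ, p (Fml.neg φ) = 1 - p φ
  add_eq : ∀ φ ψ, Incompatible φ ψ → p (Fml.or φ ψ) = p φ + p ψ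

/-- A probabilistic model: worlds with classical valuations and a finitely
additive probability measure on subsets of worlds. -/
structure PModel where
  W : Type
  nonempty : Nonempty W
  val : W → ℕ → Bool
  μ : Set W → ℝ
  nonneg : ∀ A : Set W, 0 ≤ μ A
  empty_eq : μ (∅ : Set W) = 0
  univ_eq : μ (Set.univ : Set W) = 1
  add_eq : ∀ A B : Set W, Disjoint A B → μ (A ∪ B) = μ A + μ B

/-- Denotation of a formula in a model. -/
def PModel.den (M : PModel) (φ : Fml) : Set M.W := {w | φ.eval (M.val w) = true}

/-- Induced probability of a formula in a model. -/
def PModel.prob (M : PModel) (φ : Fml) : ℝ := M.μ (M.den φ)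

/-- An upset of [0,1]: contains 1, excludes 0, upward closed within [0,1]. -/
def IsUpset (α : Set ℝ) : Prop :=
  α ⊆ Set.Icc 0 1 ∧ (1 : ℝ) ∈ α ∧ (0 : ℝ) ∉ α ∧
    ∀ x ∈ α, ∀ y ∈ Set.Icc (0:ℝ) 1, x ≤ y → y ∈ α

/-- The mirror image of α. -/
def mirror (α : Set ℝ) : Set ℝ := {x ∈ Set.Icc (0:ℝ) 1 | 1 - x ∈ α}

/-- The dual of α. -/
def dual (α : Set ℝ) : Set ℝ := Set.Icc (0:ℝ) 1 \ mirror α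

/-- Conjunction of a finite set of formulas. -/
noncomputable def conj (Γ : Finset Fml) : Fml := Γ.toList.foldr Fml.and (Fml.neg Fml.bot)

/-- Disjunction of a finite set of formulas. -/
noncomputable def disj (Δ : Finset Fml) : Fml := Δ.toList.foldr Fml.or Fml.bot

/-- Disjunction of a list of formulas. -/
def disjList (l : List Fml) : Fml := l.foldr Fml.or Fml.bot

/-- α-preservation validity (over probability distributions). -/
def PresValid (α : Set ℝ) (Γ Δ : Finset Fml) : Prop :=
  ∀ P : ProbDist, (∀ γ ∈ Γ, P.p γ ∈ α) → ∃ δ ∈ Δ, P.p δ ∈ α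

/-- α-preservation validity (over probabilistic models). -/
def PresValidM (α : Set ℝ) (Γ Δ : Finset Fml) : Prop :=
  ∀ M : PModel, (∀ γ ∈ Γ, M.prob γ ∈ α) → ∃ δ ∈ Δ, M.prob δ ∈ α

/-- α-symmetric validity. -/
def SymValid (α : Set ℝ) (Γ Δ : Finset Fml) : Prop :=
  ∀ P : ProbDist, (∀ γ ∈ Γ, P.p γ ∈ α) → ∃ δ ∈ Δ, P.p δ ∉ mirror α

/-- α-satisfiability of a finite set of formulas. -/
def Satis (α : Set ℝ) (Γ : Finset Fml) : Prop :=
  ∃ P : ProbDist, ∀ γ ∈ Γ, P.p γ ∈ α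

/-! A contradiction has probability 0 and a tautology probability 1 under every distribution, so
either one rules out a counterexample. Conversely, if every premise is satisfiable and no conclusion
is a tautology, choose a valuation satisfying each premise and one falsifying each conclusion: the
uniform distribution on these finitely many valuations is a counterexample. -/

open Finset

@[simp]
lemma Fml.eval_bot (v : ℕ → Bool) : Fml.bot.eval v = false := by
  simp [Fml.bot, Fml.and, Fml.eval]

lemma clConsistent_singleton_iff {φ : Fml} : ClConsistent {φ} ↔ ∃ v, φ.eval v = true := by
  simp [ClConsistent]

namespace ProbDist

lemma p_eq_zero_of_forall_eval_false (P : ProbDist) {φ : Fml} (h : ∀ v, φ.eval v = false) :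
    P.p φ = 0 := by
  have hinc : Incompatible φ (Fml.neg Fml.bot) := by simp [Incompatible, h]
  have := P.add_eq φ (Fml.neg Fml.bot) hinc
  linarith [P.neg_eq Fml.bot, P.bot_eq, P.le_one (Fml.or φ (Fml.neg Fml.bot)), P.nonneg φ]

lemma p_eq_one_of_tautology (P : ProbDist) {φ : Fml} (h : Tautology φ) : P.p φ = 1 := by
  have := P.p_eq_zero_of_forall_eval_false (φ := Fml.neg φ) (by simp [Fml.eval, h _])
  linarith [P.neg_eq φ]

section Uniform

variable {ι : Type*} [Fintype ι] [Nonempty ι] (V : ι → ℕ → Bool)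

noncomputable def uniform : ProbDist where
  p φ := #{i | φ.eval (V i)} / Fintype.card ι
  nonneg φ := by positivity
  le_one φ := div_le_one_of_le₀ (mod_cast card_filter_le _ _) (Nat.cast_nonneg _)
  bot_eq := by simp
  neg_eq φ := by
    have hsplit := card_filter_add_card_filter_not (s := univ) fun i => φ.eval (V i) = true
    simp only [Bool.not_eq_true, card_univ] at hsplit
    simp only [Fml.eval, Bool.not_eq_eq_eq_not, Bool.not_true]
    field_simp
    rw [← hsplit]
    push_cast
    ring
  add_eq φ ψ h := by
    classical
    have hdisj : Disjoint ({i | φ.eval (V i)} : Finset ι) ({i | ψ.eval (V i)} : Finset ι) :=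
      disjoint_filter.mpr fun i _ hφ hψ => h (V i) ⟨hφ, hψ⟩
    simp only [Fml.eval, Bool.or_eq_true]
    rw [filter_or, card_union_of_disjoint hdisj]
    push_cast
    ring

lemma uniform_p_pos {φ : Fml} {i : ι} (h : φ.eval (V i) = true) : 0 < (uniform V).p φ :=
  div_pos (mod_cast card_pos.mpr ⟨i, by simpa using h⟩) (mod_cast Fintype.card_pos)

lemma uniform_p_lt_one {φ : Fml} {i : ι} (h : φ.eval (V i) = false) : (uniform V).p φ < 1 := by
  have := uniform_p_pos V (φ := Fml.neg φ) (by simpa [Fml.eval] using h)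
  linarith [(uniform V).neg_eq φ]

end Uniform

end ProbDist

/-- (0,1]-symmetric validity holds iff some premise is a classical
contradiction or some conclusion is a classical tautology. -/
theorem stmt17 (Γ Δ : Finset Fml) :
    (¬ ∃ P : ProbDist, (∀ γ ∈ Γ, 0 < P.p γ) ∧ ∀ δ ∈ Δ, P.p δ < 1) ↔
      ((∃ γ ∈ Γ, ¬ ClConsistent {γ}) ∨ ∃ δ ∈ Δ, Tautology δ) := by
  constructor
  · contrapose!
    rintro ⟨hΓ, hΔ⟩
    choose sat hsat using fun γ : Γ => clConsistent_singleton_iff.mp (hΓ γ γ.2)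
    choose unsat hunsat using fun δ : Δ => by simpa [Tautology] using hΔ δ δ.2
    let V : Option (Γ ⊕ Δ) → ℕ → Bool
      | none => fun _ => true
      | some (.inl γ) => sat γ
      | some (.inr δ) => unsat δ
    exact ⟨ProbDist.uniform V,
      fun γ hγ => ProbDist.uniform_p_pos V (i := some (.inl ⟨γ, hγ⟩)) (hsat _),
      fun δ hδ => ProbDist.uniform_p_lt_one V (i := some (.inr ⟨δ, hδ⟩)) (hunsat _)⟩
  · rintro (⟨γ, hγ, hγ_unsat⟩ | ⟨δ, hδ, hδ_taut⟩) ⟨P, hΓ, hΔ⟩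
    · have hγ_false : ∀ v, γ.eval v = false := by
        simpa [clConsistent_singleton_iff] using hγ_unsat
      linarith [P.p_eq_zero_of_forall_eval_false hγ_false, hΓ γ hγ]
    · linarith [P.p_eq_one_of_tautology hδ_taut, hΔ δ hδ]
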